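/- arXiv:2108.08588 — 3 statements merged into one kernel-verified Lean document; each statement's English description precedes it below -/
import Mathlib

section
/- In the web graph W_n (n ≥ 4), for each i with 1 ≤ i ≤ n and every vertex w with w ∉ {p_i}, d(w, q_i) = d(w, p_i q_i) fails in general only when w is closer to p_i than to q_i; precisely, a vertex w distinguishes the vertex q_i from the edge p_i q_i if and only if d(w, p_i) < d(w, q_i). In particular, if M ⊆ V(W_n) contains no p_j, then no vertex of M distinguishes q_i from p_i q_i for any i, since every shortest path from a vertex in {q_j, r_j} to p_i passes through some q-vertex. -/
/-- Vertices of the prism allied graph `Dₙᵗ`. -/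
inductive DtV (n : ℕ) : Type
  | p : Fin n → DtV n
  | q : Fin n → DtV n
  | r : Fin n → DtV n
  | s : Fin n → DtV n
  deriving DecidableEq


/-- Cyclic successor on `Fin n` (indices mod `n`). -/
def finSucc {n : ℕ} (i : Fin n) : Fin n :=
  ⟨(i.val + 1) % n, Nat.mod_lt _ (Nat.lt_of_le_of_lt (Nat.zero_le _) i.isLt)⟩

/-- Base relation for the edges of the prism allied graph. -/
def DtRel (n : ℕ) : DtV n → DtV n → Prop := fun a b =>
  ∃ i : Fin n,
    (a = .p i ∧ b = .q i) ∨ (a = .p i ∧ b = .p (finSucc i)) ∨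
    (a = .q i ∧ b = .q (finSucc i)) ∨ (a = .r i ∧ b = .q i) ∨
    (a = .r i ∧ b = .q (finSucc i)) ∨ (a = .r i ∧ b = .s i)

/-- The prism allied graph `Dₙᵗ`. -/
def Dt (n : ℕ) : SimpleGraph (DtV n) := SimpleGraph.fromRel (DtRel n)

/-- Vertices of the web graph `Wₙ`. -/
inductive WV (n : ℕ) : Type
  | p : Fin n → WV n
  | q : Fin n → WV n
  | r : Fin n → WV n
  deriving DecidableEq

/-- Base relation for the edges of the web graph. -/
def WRel (n : ℕ) : WV n → WV n → Prop := fun a b =>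
  ∃ i : Fin n,
    (a = .p i ∧ b = .q i) ∨ (a = .p i ∧ b = .p (finSucc i)) ∨
    (a = .q i ∧ b = .q (finSucc i)) ∨ (a = .q i ∧ b = .r i)

/-- The web graph `Wₙ`. -/
def W (n : ℕ) : SimpleGraph (WV n) := SimpleGraph.fromRel (WRel n)

/-- Distance from a vertex to an (unordered) edge: `d(x, uv) = min (d x u) (d x v)`. -/
noncomputable def edgeDist {V : Type*} (G : SimpleGraph V) (w : V) (e : Sym2 V) : ℕ :=
  Sym2.lift ⟨fun u v => min (G.dist w u) (G.dist w v), fun u v => min_comm _ _⟩ e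

/-- Distance from a vertex to a mixed element (a vertex or an edge). -/
noncomputable def mixedDist {V : Type*} (G : SimpleGraph V) (w : V) :
    V ⊕ G.edgeSet → ℕ :=
  Sum.elim (G.dist w) (fun e => edgeDist G w e.1)

/-- `M` is a mixed metric generator: every two distinct elements of `V(G) ∪ E(G)` are
distinguished by some vertex of `M`. -/
def IsMixedMetricGen {V : Type*} (G : SimpleGraph V) (M : Set V) : Prop :=
  ∀ a b : V ⊕ G.edgeSet, a ≠ b → ∃ w ∈ M, mixedDist G w a ≠ mixedDist G w b

/-- `M` is a (vertex) resolving set. -/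
def IsResolving {V : Type*} (G : SimpleGraph V) (M : Set V) : Prop :=
  ∀ a b : V, a ≠ b → ∃ w ∈ M, G.dist w a ≠ G.dist w b

/-- `M` is an edge resolving set. -/
def IsEdgeResolving {V : Type*} (G : SimpleGraph V) (M : Set V) : Prop :=
  ∀ a b : G.edgeSet, a ≠ b → ∃ w ∈ M, edgeDist G w a.1 ≠ edgeDist G w b.1

/-- The metric dimension of `G`. -/
noncomputable def metricDim {V : Type*} (G : SimpleGraph V) : ℕ :=
  sInf {k | ∃ M : Set V, IsResolving G M ∧ M.ncard = k}

/-- The edge metric dimension of `G`. -/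
noncomputable def edgeMetricDim {V : Type*} (G : SimpleGraph V) : ℕ :=
  sInf {k | ∃ M : Set V, IsEdgeResolving G M ∧ M.ncard = k}

/-- The mixed metric dimension of `G`. -/
noncomputable def mixedMetricDim {V : Type*} (G : SimpleGraph V) : ℕ :=
  sInf {k | ∃ M : Set V, IsMixedMetricGen G M ∧ M.ncard = k}

/-!
In any graph the distance to an edge is the smaller of the distances to its endpoints, so `w`
separates `q i` from `p i q i` exactly when `p i` is strictly closer to `w`. In `Wₙ` the
retraction `p j ↦ q j` maps every edge to an edge or a single vertex, hence does not increase
distances; it fixes every vertex outside the `p`-cycle, so such a `w` has `d(w, q i) ≤ d(w, p i)`.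
-/

theorem edgeDist_mk {V : Type*} (G : SimpleGraph V) (w u v : V) :
    edgeDist G w s(u, v) = min (G.dist w u) (G.dist w v) := rfl

theorem dist_ne_edgeDist_iff {V : Type*} {G : SimpleGraph V} {w u v : V} :
    G.dist w v ≠ edgeDist G w s(u, v) ↔ G.dist w u < G.dist w v := by
  rw [edgeDist_mk]
  omega

namespace SimpleGraph

variable {V V' : Type*} {G : SimpleGraph V} {G' : SimpleGraph V'} {f : V → V'}

theorem Walk.exists_length_le_of_adj_imp
    (hf : ∀ ⦃a b⦄, G.Adj a b → f a = f b ∨ G'.Adj (f a) (f b)) :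
    ∀ {a b : V} (p : G.Walk a b), ∃ p' : G'.Walk (f a) (f b), p'.length ≤ p.length
  | _, _, .nil => ⟨.nil, le_rfl⟩
  | _, _, .cons h p => by
    obtain ⟨p', hp'⟩ := exists_length_le_of_adj_imp hf p
    rcases hf h with heq | hadj
    · exact ⟨p'.copy heq.symm rfl, by rw [Walk.length_copy, Walk.length_cons]; omega⟩
    · exact ⟨.cons hadj p', by simpa using hp'⟩

theorem Reachable.dist_le_of_adj_imp
    (hf : ∀ ⦃a b⦄, G.Adj a b → f a = f b ∨ G'.Adj (f a) (f b)) {a b : V}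
    (h : G.Reachable a b) : G'.dist (f a) (f b) ≤ G.dist a b := by
  obtain ⟨p, hp⟩ := h.exists_walk_length_eq_dist
  obtain ⟨p', hp'⟩ := p.exists_length_le_of_adj_imp hf
  exact (dist_le p').trans (hp ▸ hp')

end SimpleGraph

namespace WV

variable {n : ℕ}

def fold : WV n → WV n
  | p i => q i
  | q i => q i
  | r i => r i

theorem fold_eq_or_adj_fold ⦃a b : WV n⦄ (h : (W n).Adj a b) :
    a.fold = b.fold ∨ (W n).Adj a.fold b.fold := by
  obtain ⟨hne, ⟨i, h⟩ | ⟨i, h⟩⟩ := h <;>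
    rcases h with ⟨rfl, rfl⟩ | ⟨rfl, rfl⟩ | ⟨rfl, rfl⟩ | ⟨rfl, rfl⟩ <;>
    simp_all [fold, W, WRel]

theorem dist_q_le_dist_p {w : WV n} (hw : ∀ j, w ≠ p j) (i : Fin n) :
    (W n).dist w (q i) ≤ (W n).dist w (p i) := by
  have hadj : (W n).Adj (p i) (q i) := ⟨by simp, Or.inl ⟨i, Or.inl ⟨rfl, rfl⟩⟩⟩
  by_cases h : (W n).Reachable w (p i)
  · have hfix : w.fold = w := by cases w <;> simp_all [fold]
    calc (W n).dist w (q i) = (W n).dist w.fold (p i).fold := by rw [hfix]; rfl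
      _ ≤ _ := h.dist_le_of_adj_imp fold_eq_or_adj_fold
  · have h' : ¬ (W n).Reachable w (q i) := fun h' => h (h'.trans hadj.reachable.symm)
    simp [SimpleGraph.dist_eq_zero_of_not_reachable h, SimpleGraph.dist_eq_zero_of_not_reachable h']

end WV

theorem stmt15_general (n : ℕ) :
    (∀ i : Fin n, ∀ w : WV n, w ≠ WV.p i →
      ((W n).dist w (WV.q i) ≠ edgeDist (W n) w s(WV.p i, WV.q i) ↔
        (W n).dist w (WV.p i) < (W n).dist w (WV.q i))) ∧
    (∀ M : Set (WV n), (∀ j : Fin n, WV.p j ∉ M) → ∀ i : Fin n,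
      ¬ ∃ w ∈ M, (W n).dist w (WV.q i) ≠ edgeDist (W n) w s(WV.p i, WV.q i)) :=
  ⟨fun _ _ _ => dist_ne_edgeDist_iff,
    fun _ hM i ⟨_, hwM, hsep⟩ => (dist_ne_edgeDist_iff.1 hsep).not_ge
      (WV.dist_q_le_dist_p (fun j h => hM j (h ▸ hwM)) i)⟩

theorem stmt15 (n : ℕ) (hn : 4 ≤ n) :
    (∀ i : Fin n, ∀ w : WV n, w ≠ WV.p i →
      ((W n).dist w (WV.q i) ≠ edgeDist (W n) w s(WV.p i, WV.q i) ↔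
        (W n).dist w (WV.p i) < (W n).dist w (WV.q i))) ∧
    (∀ M : Set (WV n), (∀ j : Fin n, WV.p j ∉ M) → ∀ i : Fin n,
      ¬ ∃ w ∈ M, (W n).dist w (WV.q i) ≠ edgeDist (W n) w s(WV.p i, WV.q i)) :=
  stmt15_general n
end

section
/- In the prism allied graph D_n^t (n ≥ 6) with n = 2b even, the distance from p_1 to p_i equals min(i − 1, n − i + 1), the distance from p_1 to q_i equals min(i − 1, n − i + 1) + 1, and the distance from p_1 to s_i equals min(min(i−1, n−i+1), min(i, n−i)) + 3. -/
/-! The vertex `v` is at distance `f v` from `p₁`, where `f` is given by the cycle distance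
`min j (n - j)` on the outer cycle `p`, one more on the inner cycle `q`, and two (resp. three) more
than the nearer of the two cycle neighbours for the pendant path `r j – s j`. To verify this it
suffices that `f` vanishes only at `p₁`, changes by at most one along every edge, and that every
other vertex has a neighbour on which `f` is one smaller. -/

namespace SimpleGraph

variable {V : Type*} {G : SimpleGraph V} {f : V → ℕ}

lemma Walk.apply_le_apply_add_length (hf : ∀ a b, G.Adj a b → f b ≤ f a + 1) {a b : V}
    (p : G.Walk a b) : f b ≤ f a + p.length := by
  induction p with
  | nil => simp
  | cons h _ ih =>
    have := hf _ _ h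
    rw [Walk.length_cons]
    omega

lemma exists_walk_length_eq_of_descent {u : V} (hu : f u = 0)
    (hf : ∀ v ≠ u, ∃ w, G.Adj v w ∧ f w + 1 = f v) (v : V) :
    ∃ p : G.Walk u v, p.length = f v := by
  induction hk : f v generalizing v with
  | zero =>
    obtain rfl : v = u := by
      by_contra hv
      obtain ⟨w, -, hw⟩ := hf v hv
      omega
    exact ⟨.nil, rfl⟩
  | succ k ih =>
    obtain ⟨w, hvw, hw⟩ := hf v (by rintro rfl; omega)
    obtain ⟨p, hp⟩ := ih w (by omega)
    exact ⟨p.concat hvw.symm, by rw [Walk.length_concat, hp]⟩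

lemma dist_eq_of_lipschitz_of_descent {u : V} (hu : f u = 0)
    (hlip : ∀ a b, G.Adj a b → f b ≤ f a + 1)
    (hdesc : ∀ v ≠ u, ∃ w, G.Adj v w ∧ f w + 1 = f v) (v : V) :
    G.dist u v = f v := by
  obtain ⟨p, hp⟩ := exists_walk_length_eq_of_descent hu hdesc v
  obtain ⟨q, hq⟩ := p.reachable.exists_walk_length_eq_dist
  have := q.apply_le_apply_add_length hlip
  have := G.dist_le p
  omega

end SimpleGraph

-- Distance from `0` to `j` on an `n`-cycle, for `j ≤ n`; `cycDist n n = 0` lets `j + 1` stand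
-- for the cyclic successor.
def cycDist (n j : ℕ) : ℕ := min j (n - j)

lemma cycDist_finSucc {n : ℕ} (j : Fin n) : cycDist n (finSucc j) = cycDist n (j + 1) := by
  have := j.isLt
  rcases (Nat.succ_le_of_lt this).eq_or_lt with h | h
  · simp [cycDist, finSucc, ← h]
  · simp [cycDist, finSucc, Nat.mod_eq_of_lt h]

namespace Dt

def distFromP0 (n : ℕ) : DtV n → ℕ
  | .p j => cycDist n j
  | .q j => cycDist n j + 1
  | .r j => min (cycDist n j) (cycDist n (j + 1)) + 2
  | .s j => min (cycDist n j) (cycDist n (j + 1)) + 3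

lemma distFromP0_le_of_rel {n : ℕ} {a b : DtV n} (h : DtRel n a b) :
    distFromP0 n b ≤ distFromP0 n a + 1 ∧ distFromP0 n a ≤ distFromP0 n b + 1 := by
  obtain ⟨i, ⟨rfl, rfl⟩ | ⟨rfl, rfl⟩ | ⟨rfl, rfl⟩ | ⟨rfl, rfl⟩ | ⟨rfl, rfl⟩ | ⟨rfl, rfl⟩⟩ := h <;>
  · simp only [distFromP0, cycDist_finSucc]
    unfold cycDist
    omega

lemma distFromP0_le_of_adj {n : ℕ} {a b : DtV n} (h : (Dt n).Adj a b) :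
    distFromP0 n b ≤ distFromP0 n a + 1 := by
  rcases (SimpleGraph.fromRel_adj _ _ _).mp h with ⟨-, h | h⟩
  exacts [(distFromP0_le_of_rel h).1, (distFromP0_le_of_rel h).2]

lemma exists_rel_distFromP0_add_one {n : ℕ} (hn : 0 < n) (v : DtV n) (hv : v ≠ .p ⟨0, hn⟩) :
    ∃ w, (DtRel n v w ∨ DtRel n w v) ∧ distFromP0 n w + 1 = distFromP0 n v := by
  cases v with
  | p j =>
    have hj0 : (j : ℕ) ≠ 0 := fun h => hv (congrArg _ (Fin.ext h))
    by_cases hj : (j : ℕ) ≤ n - j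
    · refine ⟨.p ⟨j - 1, by omega⟩, .inr ⟨⟨j - 1, by omega⟩, .inr (.inl ⟨rfl, ?_⟩)⟩, ?_⟩
      · congr
        ext
        simp [finSucc, Nat.sub_add_cancel (Nat.pos_of_ne_zero hj0), Nat.mod_eq_of_lt j.isLt]
      · simp only [distFromP0, cycDist]
        omega
    · refine ⟨.p (finSucc j), .inl ⟨j, .inr (.inl ⟨rfl, rfl⟩)⟩, ?_⟩
      simp only [distFromP0, cycDist_finSucc]
      unfold cycDist
      omega
  | q j => exact ⟨.p j, .inr ⟨j, .inl ⟨rfl, rfl⟩⟩, rfl⟩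
  | r j =>
    by_cases hj : cycDist n j ≤ cycDist n (j + 1)
    · refine ⟨.q j, .inl ⟨j, .inr (.inr (.inr (.inl ⟨rfl, rfl⟩)))⟩, ?_⟩
      simp only [distFromP0]
      omega
    · refine ⟨.q (finSucc j), .inl ⟨j, .inr (.inr (.inr (.inr (.inl ⟨rfl, rfl⟩))))⟩, ?_⟩
      simp only [distFromP0, cycDist_finSucc]
      omega
  | s j => exact ⟨.r j, .inr ⟨j, .inr (.inr (.inr (.inr (.inr ⟨rfl, rfl⟩))))⟩, rfl⟩

lemma dist_p_zero {n : ℕ} (hn : 0 < n) (v : DtV n) :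
    (Dt n).dist (.p ⟨0, hn⟩) v = distFromP0 n v := by
  refine SimpleGraph.dist_eq_of_lipschitz_of_descent (by simp [distFromP0, cycDist])
    (fun _ _ => distFromP0_le_of_adj) (fun v hv => ?_) v
  obtain ⟨w, hvw, hw⟩ := exists_rel_distFromP0_add_one hn v hv
  exact ⟨w, (SimpleGraph.fromRel_adj _ _ _).mpr ⟨by rintro rfl; omega, hvw⟩, hw⟩

end Dt

theorem stmt16 (n : ℕ)
    (i : ℕ) (h1 : 1 ≤ i) (h2 : i ≤ n) :
    (Dt n).dist (DtV.p ⟨0, by omega⟩) (DtV.p ⟨i - 1, by omega⟩) =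
      min (i - 1) (n - i + 1) ∧
    (Dt n).dist (DtV.p ⟨0, by omega⟩) (DtV.q ⟨i - 1, by omega⟩) =
      min (i - 1) (n - i + 1) + 1 ∧
    (Dt n).dist (DtV.p ⟨0, by omega⟩) (DtV.s ⟨i - 1, by omega⟩) =
      min (min (i - 1) (n - i + 1)) (min i (n - i)) + 3 := by
  simp only [Dt.dist_p_zero (by omega : 0 < n), Dt.distFromP0, cycDist]
  refine ⟨?_, ?_, ?_⟩ <;> omega
end

section
/- For every n ≥ 4 the mixed metric dimension of the web graph W_n is strictly greater than both its metric dimension and its edge metric dimension, and it is unbounded as a function of n (mdim(W_n) = n + 1 → ∞ as n → ∞). -/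
/-!
Put `R = {r₁, …, rₙ}`. From `rₖ` the distance to a vertex `x` equals the layer of `x` (0 for
`r`, 1 for `q`, 2 for `p`) when `x` lies on the `k`-th spoke and exceeds it otherwise; so the
distance profile of a vertex or an edge over `R` has its minimum value, and the set of spokes where
it is attained, determined by the element. These two data already tell apart any two vertices
and any two edges (for `n ≥ 3`), hence `dim(Wₙ), edim(Wₙ) ≤ n`. The only vertex–edge pairs they
confuse are `rᵢ, qᵢrᵢ` and `qᵢ, pᵢqᵢ`, which one outer vertex `pⱼ` separates, so `R ∪ {pⱼ}` is a
mixed metric generator. Conversely a mixed generator must contain every pendant vertex `rᵢ`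
(only `rᵢ` separates `qᵢ` from `qᵢrᵢ`) and some vertex outside `R` (no `rₖ` separates `qᵢ` from
`pᵢqᵢ`), so `mdim(Wₙ) = n + 1`.
-/

open SimpleGraph

section GraphDistance

variable {V : Type*} {G : SimpleGraph V}

theorem SimpleGraph.Walk.le_add_length_of_adj_le (f : V → ℕ)
    (hf : ∀ u v, G.Adj u v → f v ≤ f u + 1) {a b : V} (w : G.Walk a b) :
    f b ≤ f a + w.length := by
  induction w with
  | nil => simp
  | cons h _ ih => have := hf _ _ h; simp only [Walk.length_cons]; omega

theorem SimpleGraph.dist_eq_of_adj_le {a b : V} (f : V → ℕ)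
    (hf : ∀ u v, G.Adj u v → f v ≤ f u + 1) (ha : f a = 0) (w : G.Walk a b)
    (hw : w.length = f b) : G.dist a b = f b := by
  refine le_antisymm (hw ▸ dist_le w) ?_
  obtain ⟨w', hw'⟩ := w.reachable.exists_walk_length_eq_dist
  have := w'.le_add_length_of_adj_le f hf
  omega

theorem SimpleGraph.dist_le_dist_of_pendant {u v w : V} (huv : G.Adj u v)
    (hv : ∀ x, G.Adj v x → x = u) (hwv : w ≠ v) : G.dist w u ≤ G.dist w v := by
  by_cases hr : G.Reachable w v
  · obtain ⟨γ, hγ⟩ := hr.symm.exists_walk_length_eq_dist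
    cases γ with
    | nil => exact absurd rfl hwv
    | cons h γ' =>
      obtain rfl := hv _ h
      rw [dist_comm, dist_comm (u := w), ← hγ, Walk.length_cons]
      exact (dist_le γ').trans (Nat.le_succ _)
  · have hu : ¬G.Reachable w u := fun h => hr (h.trans huv.reachable)
    rw [dist_eq_zero_of_not_reachable hu]
    exact Nat.zero_le _

end GraphDistance

section Dimensions

variable {V : Type*} {G : SimpleGraph V}

theorem IsMixedMetricGen.mem_of_pendant {M : Set V} (hM : IsMixedMetricGen G M) {u v : V}
    (huv : G.Adj u v) (hv : ∀ x, G.Adj v x → x = u) : v ∈ M := by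
  obtain ⟨w, hwM, hw⟩ := hM (.inl u) (.inr ⟨s(u, v), huv⟩) (by simp)
  by_contra hvM
  have hwv : w ≠ v := by rintro rfl; exact hvM hwM
  refine hw ?_
  simp only [mixedDist, Sum.elim_inl, Sum.elim_inr, edgeDist, Sym2.lift_mk]
  exact (min_eq_left (dist_le_dist_of_pendant huv hv hwv)).symm

theorem IsResolving.mono {M M' : Set V} (hM : IsResolving G M) (h : M ⊆ M') :
    IsResolving G M' := fun a b hab =>
  have ⟨w, hw, hd⟩ := hM a b hab
  ⟨w, h hw, hd⟩

theorem IsEdgeResolving.mono {M M' : Set V} (hM : IsEdgeResolving G M) (h : M ⊆ M') :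
    IsEdgeResolving G M' := fun a b hab =>
  have ⟨w, hw, hd⟩ := hM a b hab
  ⟨w, h hw, hd⟩

theorem isMixedMetricGen_of_isResolving {M : Set V} (hV : IsResolving G M)
    (hE : IsEdgeResolving G M)
    (hVE : ∀ (x : V) (e : G.edgeSet), ∃ w ∈ M, G.dist w x ≠ edgeDist G w e) :
    IsMixedMetricGen G M := by
  rintro (x | e) (y | f) hne
  · exact hV x y (fun h => hne (h ▸ rfl))
  · exact hVE x f
  · obtain ⟨w, hw, h⟩ := hVE y e
    exact ⟨w, hw, Ne.symm h⟩
  · exact hE e f (fun h => hne (h ▸ rfl))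

theorem metricDim_le {M : Set V} (hM : IsResolving G M) : metricDim G ≤ M.ncard :=
  Nat.sInf_le ⟨M, hM, rfl⟩

theorem edgeMetricDim_le {M : Set V} (hM : IsEdgeResolving G M) : edgeMetricDim G ≤ M.ncard :=
  Nat.sInf_le ⟨M, hM, rfl⟩

theorem mixedMetricDim_eq_ncard_of_forall_le {M₀ : Set V} (hM₀ : IsMixedMetricGen G M₀)
    (h : ∀ M, IsMixedMetricGen G M → M₀.ncard ≤ M.ncard) : mixedMetricDim G = M₀.ncard :=
  le_antisymm (Nat.sInf_le ⟨M₀, hM₀, rfl⟩) (le_csInf ⟨_, M₀, hM₀, rfl⟩ (by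
    rintro _ ⟨M, hM, rfl⟩
    exact h M hM))

end Dimensions

def AttainsMinExactlyOn {ι : Type*} (f : ι → ℕ) (m : ℕ) (A : Set ι) : Prop :=
  ∀ k, m ≤ f k ∧ (f k = m ↔ k ∈ A)

namespace AttainsMinExactlyOn

variable {ι : Type*} {f g : ι → ℕ} {m m' : ℕ} {A A' : Set ι}

theorem unique (h : AttainsMinExactlyOn f m A) (h' : AttainsMinExactlyOn f m' A')
    (hA : A.Nonempty) (hA' : A'.Nonempty) : m = m' ∧ A = A' := by
  obtain ⟨a, ha⟩ := hA
  obtain ⟨a', ha'⟩ := hA'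
  have hm : m = m' :=
    le_antisymm ((h a').1.trans ((h' a').2.2 ha').le) ((h' a).1.trans ((h a).2.2 ha).le)
  subst hm
  exact ⟨rfl, Set.ext fun k => (h k).2.symm.trans (h' k).2⟩

theorem min (hf : AttainsMinExactlyOn f m A) (hg : AttainsMinExactlyOn g m' A') :
    AttainsMinExactlyOn (fun k => min (f k) (g k)) (min m m')
      ((if m ≤ m' then A else ∅) ∪ (if m' ≤ m then A' else ∅)) := by
  intro k
  beta_reduce
  obtain ⟨hfk, hfA⟩ := hf k
  obtain ⟨hgk, hgA⟩ := hg k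
  refine ⟨by omega, ?_⟩
  split_ifs <;>
    simp only [Set.mem_union, Set.mem_empty_iff_false, or_false, false_or, ← hfA, ← hgA] <;>
    omega

end AttainsMinExactlyOn

section Cycle

variable {n : ℕ}

theorem finSucc_eq_add_one [NeZero n] (i : Fin n) : finSucc i = i + 1 := by
  ext
  simp [finSucc, Fin.val_add]

theorem cycleGraph_adj_iff_finSucc (hn : 2 ≤ n) {u v : Fin n} :
    (cycleGraph n).Adj u v ↔ u = finSucc v ∨ v = finSucc u := by
  obtain ⟨m, rfl⟩ : ∃ m, n = m + 2 := ⟨n - 2, by omega⟩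
  simp only [cycleGraph_adj, finSucc_eq_add_one, sub_eq_iff_eq_add']

theorem cycleGraph_adj_finSucc (hn : 2 ≤ n) (i : Fin n) : (cycleGraph n).Adj i (finSucc i) :=
  (cycleGraph_adj_iff_finSucc hn).2 (.inr rfl)

theorem finSucc_ne_self (hn : 2 ≤ n) (i : Fin n) : finSucc i ≠ i :=
  (cycleGraph_adj_finSucc hn i).ne.symm

theorem finSucc_finSucc_ne_self (hn : 3 ≤ n) (i : Fin n) : finSucc (finSucc i) ≠ i := by
  obtain ⟨m, rfl⟩ : ∃ m, n = m + 3 := ⟨n - 3, by omega⟩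
  simp only [finSucc_eq_add_one, add_assoc, ne_eq, add_eq_left, Fin.ext_iff, Fin.val_add,
    Fin.val_one, Fin.val_zero]
  rw [Nat.mod_eq_of_lt (by omega)]
  omega

theorem cycleGraph_dist_finSucc_le (hn : 2 ≤ n) (m i : Fin n) :
    (cycleGraph n).dist m (finSucc i) ≤ (cycleGraph n).dist m i + 1 ∧
      (cycleGraph n).dist m i ≤ (cycleGraph n).dist m (finSucc i) + 1 := by
  have := (cycleGraph_adj_finSucc hn i).diff_dist_adj (u := m)
  omega

theorem pair_finSucc_ne_singleton (hn : 2 ≤ n) (i j : Fin n) :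
    ({finSucc i, i} : Set (Fin n)) ≠ {j} := fun h => by
  have h' := (Set.eq_singleton_iff_unique_mem.1 h).2
  exact finSucc_ne_self hn i ((h' _ (.inl rfl)).trans (h' _ (.inr rfl)).symm)

theorem eq_of_pair_finSucc_eq (hn : 3 ≤ n) {i j : Fin n}
    (h : ({finSucc i, i} : Set (Fin n)) = {finSucc j, j}) : i = j := by
  rcases Set.pair_eq_pair_iff.1 h with ⟨-, h⟩ | ⟨h₁, h₂⟩
  · exact h
  · exact absurd (by rw [← h₂, h₁]) (finSucc_finSucc_ne_self hn j)

theorem exists_walk_length_eq_cycleGraph_dist {V : Type*} {G : SimpleGraph V} (hn : 2 ≤ n)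
    (f : Fin n → V) (hf : ∀ i, G.Adj (f i) (f (finSucc i))) (i j : Fin n) :
    ∃ w : G.Walk (f i) (f j), w.length = (cycleGraph n).dist i j := by
  let φ : cycleGraph n →g G := ⟨f, fun h => by
    rcases (cycleGraph_adj_iff_finSucc hn).1 h with rfl | rfl
    exacts [(hf _).symm, hf _]⟩
  obtain ⟨γ, hγ⟩ := (cycleGraph_preconnected i j).exists_walk_length_eq_dist
  exact ⟨γ.map φ, by rw [Walk.length_map, hγ]⟩

end Cycle

namespace WV

variable {n : ℕ}

/-- The distance from `x` to the pendant vertex `r x.index`. -/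
def layer : WV n → ℕ
  | p _ => 2
  | q _ => 1
  | r _ => 0

def index : WV n → Fin n
  | p i | q i | r i => i

theorem eq_of_layer_eq_of_index_eq {x y : WV n} (hl : x.layer = y.layer)
    (hi : x.index = y.index) : x = y := by
  cases x <;> cases y <;> simp_all [layer, index]

instance : Finite (WV n) :=
  Finite.of_surjective (Sum.elim p (Sum.elim q r) : Fin n ⊕ Fin n ⊕ Fin n → WV n) <| by
    rintro (i | i | i)
    exacts [⟨.inl i, rfl⟩, ⟨.inr (.inl i), rfl⟩, ⟨.inr (.inr i), rfl⟩]

end WV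

namespace WebGraph

open WV

variable {n : ℕ}

theorem adj_iff {u v : WV n} : (W n).Adj u v ↔ u ≠ v ∧ (WRel n u v ∨ WRel n v u) :=
  fromRel_adj _ _ _

theorem adj_p_q (i : Fin n) : (W n).Adj (p i) (q i) :=
  adj_iff.2 ⟨nofun, .inl ⟨i, .inl ⟨rfl, rfl⟩⟩⟩

theorem adj_p_p (hn : 2 ≤ n) (i : Fin n) : (W n).Adj (p i) (p (finSucc i)) :=
  adj_iff.2 ⟨fun h => finSucc_ne_self hn i (WV.p.inj h).symm, .inl ⟨i, .inr (.inl ⟨rfl, rfl⟩)⟩⟩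

theorem adj_q_q (hn : 2 ≤ n) (i : Fin n) : (W n).Adj (q i) (q (finSucc i)) :=
  adj_iff.2 ⟨fun h => finSucc_ne_self hn i (WV.q.inj h).symm,
    .inl ⟨i, .inr (.inr (.inl ⟨rfl, rfl⟩))⟩⟩

theorem adj_q_r (i : Fin n) : (W n).Adj (q i) (r i) :=
  adj_iff.2 ⟨nofun, .inl ⟨i, .inr (.inr (.inr ⟨rfl, rfl⟩))⟩⟩

theorem eq_of_adj_r {i : Fin n} {x : WV n} (h : (W n).Adj (r i) x) : x = q i := by
  obtain ⟨-, ⟨j, h⟩ | ⟨j, h⟩⟩ := adj_iff.1 h <;> simp_all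

theorem exists_eq_of_mem_edgeSet {e : Sym2 (WV n)} (he : e ∈ (W n).edgeSet) :
    ∃ i, e = s(p i, q i) ∨ e = s(p i, p (finSucc i)) ∨ e = s(q i, q (finSucc i)) ∨
      e = s(q i, r i) := by
  induction e using Sym2.ind with
  | _ u v =>
    obtain ⟨-, ⟨i, h⟩ | ⟨i, h⟩⟩ := adj_iff.1 he <;> refine ⟨i, ?_⟩ <;>
      rcases h with ⟨rfl, rfl⟩ | ⟨rfl, rfl⟩ | ⟨rfl, rfl⟩ | ⟨rfl, rfl⟩ <;> simp [Sym2.eq_swap]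

/-- The distance in `W n`: travel along the cycle of `p`'s or of `q`'s, and climb between the
layers at either end. -/
noncomputable def webDist : WV n → WV n → ℕ
  | p i, p j | q i, q j => (cycleGraph n).dist i j
  | p i, q j | q i, p j | q i, r j | r i, q j => (cycleGraph n).dist i j + 1
  | p i, r j | r i, p j => (cycleGraph n).dist i j + 2
  | r i, r j => if i = j then 0 else (cycleGraph n).dist i j + 2

theorem webDist_self (a : WV n) : webDist a a = 0 := by
  cases a <;> simp [webDist]

theorem webDist_le_of_adj (hn : 2 ≤ n) (a : WV n) {u v : WV n} (h : (W n).Adj u v) :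
    webDist a v ≤ webDist a u + 1 := by
  suffices H : ∀ u v, WRel n u v → webDist a v ≤ webDist a u + 1 ∧ webDist a u ≤ webDist a v + 1
  · obtain ⟨-, huv | hvu⟩ := adj_iff.1 h
    exacts [(H u v huv).1, (H v u hvu).2]
  rintro _ _ ⟨i, ⟨rfl, rfl⟩ | ⟨rfl, rfl⟩ | ⟨rfl, rfl⟩ | ⟨rfl, rfl⟩⟩ <;> cases a with
  | _ m =>
    have := cycleGraph_dist_finSucc_le hn m i
    simp only [webDist]
    try split_ifs with hmi
    all_goals first | omega | (subst hmi; simp)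

theorem exists_walk_length_eq_webDist (hn : 2 ≤ n) (a b : WV n) :
    ∃ w : (W n).Walk a b, w.length = webDist a b := by
  cases a <;> cases b <;> rename_i i j <;>
    obtain ⟨γp, hγp⟩ := exists_walk_length_eq_cycleGraph_dist hn p (adj_p_p hn) i j <;>
    obtain ⟨γq, hγq⟩ := exists_walk_length_eq_cycleGraph_dist hn q (adj_q_q hn) i j
  · exact ⟨γp, hγp⟩
  · exact ⟨γp.concat (adj_p_q j), by simp [webDist, hγp]⟩
  · exact ⟨(γp.concat (adj_p_q j)).concat (adj_q_r j), by simp [webDist, hγp]⟩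
  · exact ⟨γq.concat (adj_p_q j).symm, by simp [webDist, hγq]⟩
  · exact ⟨γq, hγq⟩
  · exact ⟨γq.concat (adj_q_r j), by simp [webDist, hγq]⟩
  · exact ⟨.cons (adj_q_r i).symm (γq.concat (adj_p_q j).symm), by simp [webDist, hγq]⟩
  · exact ⟨.cons (adj_q_r i).symm γq, by simp [webDist, hγq]⟩
  · by_cases hij : i = j
    · subst hij
      exact ⟨.nil, by simp [webDist]⟩
    · exact ⟨.cons (adj_q_r i).symm (γq.concat (adj_q_r j)), by simp [webDist, hij, hγq]⟩

theorem dist_eq_webDist (hn : 2 ≤ n) (a b : WV n) : (W n).dist a b = webDist a b :=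
  have ⟨w, hw⟩ := exists_walk_length_eq_webDist hn a b
  dist_eq_of_adj_le (webDist a) (fun _ _ => webDist_le_of_adj hn a) (webDist_self a) w hw

theorem attainsMinExactlyOn_dist_r (hn : 2 ≤ n) (x : WV n) :
    AttainsMinExactlyOn (fun k => (W n).dist (r k) x) x.layer {x.index} := by
  intro k
  have hc := (cycleGraph_preconnected k x.index).dist_eq_zero_iff
  simp only [dist_eq_webDist hn, Set.mem_singleton_iff]
  cases x <;> simp only [webDist, layer, index] at hc ⊢
  · omega
  · omega
  · split_ifs <;> simp_all

noncomputable def edgeLayer : Sym2 (WV n) → ℕ :=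
  Sym2.lift ⟨fun u v => min u.layer v.layer, fun _ _ => min_comm _ _⟩

def edgeBase : Sym2 (WV n) → Set (Fin n) :=
  Sym2.lift ⟨fun u v => (if u.layer ≤ v.layer then {u.index} else ∅) ∪
    (if v.layer ≤ u.layer then {v.index} else ∅), fun _ _ => Set.union_comm _ _⟩

theorem edgeBase_nonempty (e : Sym2 (WV n)) : (edgeBase e).Nonempty := by
  induction e using Sym2.ind with
  | _ u v => by_cases h : u.layer ≤ v.layer <;> simp [edgeBase, h, le_of_not_ge]

theorem attainsMinExactlyOn_edgeDist_r (hn : 2 ≤ n) (e : Sym2 (WV n)) :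
    AttainsMinExactlyOn (fun k => edgeDist (W n) (r k) e) (edgeLayer e) (edgeBase e) := by
  induction e using Sym2.ind with
  | _ u v => exact (attainsMinExactlyOn_dist_r hn u).min (attainsMinExactlyOn_dist_r hn v)

theorem edge_eq_of_edgeLayer_eq_of_edgeBase_eq (hn : 3 ≤ n) {e f : Sym2 (WV n)}
    (he : e ∈ (W n).edgeSet) (hf : f ∈ (W n).edgeSet) (hl : edgeLayer e = edgeLayer f)
    (hb : edgeBase e = edgeBase f) : e = f := by
  obtain ⟨i, rfl | rfl | rfl | rfl⟩ := exists_eq_of_mem_edgeSet he <;>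
  obtain ⟨j, rfl | rfl | rfl | rfl⟩ := exists_eq_of_mem_edgeSet hf <;>
  simp [edgeLayer, edgeBase, layer, index] at hl hb ⊢
  · exact hb
  · exact pair_finSucc_ne_singleton (by omega) j i hb.symm
  · obtain rfl := eq_of_pair_finSucc_eq hn hb
    simp
  · exact pair_finSucc_ne_singleton (by omega) i j hb
  · obtain rfl := eq_of_pair_finSucc_eq hn hb
    simp
  · exact hb

theorem exists_eq_of_layer_eq_edgeLayer (hn : 2 ≤ n) {x : WV n} {e : Sym2 (WV n)}
    (he : e ∈ (W n).edgeSet) (hl : x.layer = edgeLayer e) (hb : {x.index} = edgeBase e) :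
    ∃ i, x = r i ∧ e = s(q i, r i) ∨ x = q i ∧ e = s(p i, q i) := by
  obtain ⟨i, rfl | rfl | rfl | rfl⟩ := exists_eq_of_mem_edgeSet he <;> cases x <;>
    simp [edgeLayer, edgeBase, layer, index] at hl hb ⊢
  · exact hb.symm
  · exact pair_finSucc_ne_singleton hn _ _ hb.symm
  · exact pair_finSucc_ne_singleton hn _ _ hb.symm
  · exact hb.symm

theorem isResolving_range_r (hn : 2 ≤ n) : IsResolving (W n) (Set.range r) := by
  intro x y hxy
  by_contra! h
  have hxy' : (fun k => (W n).dist (r k) x) = fun k => (W n).dist (r k) y :=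
    funext fun k => h _ ⟨k, rfl⟩
  obtain ⟨hl, hi⟩ := (attainsMinExactlyOn_dist_r hn x).unique
    (hxy' ▸ attainsMinExactlyOn_dist_r hn y) (Set.singleton_nonempty _) (Set.singleton_nonempty _)
  exact hxy (eq_of_layer_eq_of_index_eq hl (Set.singleton_eq_singleton_iff.1 hi))

theorem isEdgeResolving_range_r (hn : 3 ≤ n) : IsEdgeResolving (W n) (Set.range r) := by
  rintro ⟨e, he⟩ ⟨f, hf⟩ hef
  by_contra! h
  have hef' : (fun k => edgeDist (W n) (r k) e) = fun k => edgeDist (W n) (r k) f :=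
    funext fun k => h _ ⟨k, rfl⟩
  obtain ⟨hl, hb⟩ := (attainsMinExactlyOn_edgeDist_r (by omega) e).unique
    (hef' ▸ attainsMinExactlyOn_edgeDist_r (by omega) f) (edgeBase_nonempty e)
    (edgeBase_nonempty f)
  exact hef (Subtype.ext (edge_eq_of_edgeLayer_eq_of_edgeBase_eq hn he hf hl hb))

/-- The only vertex–edge pairs that no `r k` separates are `r i, q i r i` and `q i, p i q i`;
any `p j` separates them, being closer to `q i` than to `r i`, and to `p i` than to `q i`. -/
theorem exists_mem_insert_p_range_r_dist_ne_edgeDist (hn : 2 ≤ n) (j : Fin n) (x : WV n)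
    (e : (W n).edgeSet) :
    ∃ w ∈ insert (p j) (Set.range r), (W n).dist w x ≠ edgeDist (W n) w e := by
  obtain ⟨e, he⟩ := e
  by_contra! h
  have hxe : (fun k => (W n).dist (r k) x) = fun k => edgeDist (W n) (r k) e :=
    funext fun k => h _ (Set.mem_insert_of_mem _ ⟨k, rfl⟩)
  obtain ⟨hl, hb⟩ := (attainsMinExactlyOn_dist_r hn x).unique
    (hxe ▸ attainsMinExactlyOn_edgeDist_r hn e) (Set.singleton_nonempty _) (edgeBase_nonempty e)
  have hp := h (p j) (Set.mem_insert _ _)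
  obtain ⟨i, ⟨rfl, rfl⟩ | ⟨rfl, rfl⟩⟩ := exists_eq_of_layer_eq_edgeLayer hn he hl hb <;>
    simp [edgeDist, dist_eq_webDist hn, webDist] at hp

theorem isMixedMetricGen_insert_p_range_r (hn : 3 ≤ n) (j : Fin n) :
    IsMixedMetricGen (W n) (insert (p j) (Set.range r)) :=
  isMixedMetricGen_of_isResolving ((isResolving_range_r (by omega)).mono (Set.subset_insert _ _))
    ((isEdgeResolving_range_r hn).mono (Set.subset_insert _ _))
    (exists_mem_insert_p_range_r_dist_ne_edgeDist (by omega) j)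

theorem range_r_subset_of_isMixedMetricGen {M : Set (WV n)} (hM : IsMixedMetricGen (W n) M) :
    Set.range r ⊆ M := by
  rintro _ ⟨i, rfl⟩
  exact hM.mem_of_pendant (adj_q_r i) fun _ => eq_of_adj_r

/-- Since every `r k` is closer to `q j` than to `p j`, none separates `q j` from the edge
`p j q j`. -/
theorem exists_mem_notMem_range_r_of_isMixedMetricGen (hn : 2 ≤ n) (j : Fin n)
    {M : Set (WV n)} (hM : IsMixedMetricGen (W n) M) : ∃ w ∈ M, w ∉ Set.range r := by
  obtain ⟨w, hwM, hw⟩ := hM (.inl (q j)) (.inr ⟨s(p j, q j), adj_p_q j⟩) (by simp)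
  refine ⟨w, hwM, ?_⟩
  rintro ⟨k, rfl⟩
  simp [mixedDist, edgeDist, dist_eq_webDist hn, webDist] at hw

theorem ncard_range_r : (Set.range (r : Fin n → WV n)).ncard = n := by
  rw [Set.ncard_range_of_injective fun _ _ => WV.r.inj, Nat.card_eq_fintype_card,
    Fintype.card_fin]

theorem ncard_insert_range_r {w : WV n} (hw : w ∉ Set.range r) :
    (insert w (Set.range r)).ncard = n + 1 := by
  rw [Set.ncard_insert_of_notMem hw, ncard_range_r]

theorem mixedMetricDim_eq (hn : 3 ≤ n) : mixedMetricDim (W n) = n + 1 := by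
  let j : Fin n := ⟨0, by omega⟩
  have hp : p j ∉ Set.range r := by rintro ⟨_, ⟨⟩⟩
  rw [← ncard_insert_range_r hp]
  refine mixedMetricDim_eq_ncard_of_forall_le (isMixedMetricGen_insert_p_range_r hn j)
    fun M hM => ?_
  obtain ⟨w, hwM, hw⟩ := exists_mem_notMem_range_r_of_isMixedMetricGen (by omega) j hM
  rw [ncard_insert_range_r hp, ← ncard_insert_range_r hw]
  exact Set.ncard_le_ncard (Set.insert_subset hwM (range_r_subset_of_isMixedMetricGen hM))

end WebGraph

theorem stmt18 :
    (∀ n : ℕ, 4 ≤ n →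
      metricDim (W n) < mixedMetricDim (W n) ∧
      edgeMetricDim (W n) < mixedMetricDim (W n) ∧
      mixedMetricDim (W n) = n + 1) ∧
    (∀ C : ℕ, ∃ n : ℕ, 4 ≤ n ∧ C < mixedMetricDim (W n)) := by
  refine ⟨fun n hn => ?_, fun C => ⟨C + 4, by omega, ?_⟩⟩
  · have hM := WebGraph.mixedMetricDim_eq (n := n) (by omega)
    have hV := (metricDim_le (WebGraph.isResolving_range_r (n := n) (by omega))).trans_eq
      WebGraph.ncard_range_r
    have hE := (edgeMetricDim_le (WebGraph.isEdgeResolving_range_r (n := n) (by omega))).trans_eq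
      WebGraph.ncard_range_r
    omega
  · rw [WebGraph.mixedMetricDim_eq (by omega)]
    omega
end
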